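/- arXiv:2011.03655 — 5 statements merged into one kernel-verified Lean document; each statement's English description precedes it below -/
import Mathlib

section
/- Consider the Bernoulli model: X = {0,1}, Θ = [0,1], ν counting measure on X, and q(θ,x) = θ^x (1−θ)^{1−x}. Fix α ∈ (0, 0.2) and ε ∈ (0,α). Then there exist a product-measurable (in (θ,x), for each prior) acceptance probability function ψ : P([0,1]) × [0,1] × {0,1} → [0,1] and a prior π₀ ∈ P([0,1]) such that: (a) for every π ∈ P([0,1]) and P_π-almost every x, ∫ ψ(π,θ,x) Post(π,x)(dθ) = 1 − α; (b) ∫_X (1 − ψ(π₀,θ,x)) P_θ(dx) ≤ α for every θ ∈ [0,1], where P_θ is the Bernoulli(θ) distribution; and (c) for every π and x, the support of θ ↦ ψ(π,θ,x) is contained in the ε-fattening of the 1−(α−ε) credible ball of Post(π,x), and the 1−α credible ball of Post(π,x) is contained in the ε-fattening of the support of θ ↦ ψ(π,θ,x). -/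
open MeasureTheory

/-- The Bernoulli parameter space `[0,1]`. -/
abbrev BernΘ : Set ℝ := Set.Icc (0:ℝ) 1

/-- The Bernoulli conditional density `q(θ,x) = θ^x (1-θ)^{1-x}` w.r.t. counting measure
on `{0,1}` (encoded as `Bool`). -/
noncomputable def bq (θ : ↥BernΘ) (x : Bool) : ℝ := if x then (θ : ℝ) else 1 - (θ : ℝ)

/-- The Bernoulli(θ) distribution on `{0,1}`: density `bq θ` w.r.t. counting measure. -/
noncomputable def bP (θ : ↥BernΘ) : Measure Bool :=
  Measure.count.withDensity fun x => ENNReal.ofReal (bq θ x)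

/-- The Bernoulli posterior of prior `π` given observation `x`. -/
noncomputable def bPost (π : ProbabilityMeasure ↥BernΘ) (x : Bool) : Measure ↥BernΘ :=
  (∫⁻ θ, ENNReal.ofReal (bq θ x) ∂(π : Measure ↥BernΘ))⁻¹ •
    (π : Measure ↥BernΘ).withDensity fun θ => ENNReal.ofReal (bq θ x)

/-- The mean `M(μ)` of a measure on `[0,1]`. -/
noncomputable def bMean (μ : Measure ↥BernΘ) : ℝ := ∫ θ, (θ : ℝ) ∂μ

/-- The radius `L_α(μ)` of the `1-α` credible ball of `μ`. -/
noncomputable def bBallLevel (μ : Measure ↥BernΘ) (α : ℝ) : ℝ :=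
  sInf {r : ℝ | 0 < r ∧ 1 - α ≤ (μ {θ : ↥BernΘ | |(θ : ℝ) - bMean μ| ≤ r}).toReal}

/-- The `1-α` credible ball of `μ`. -/
noncomputable def bCredBall (μ : Measure ↥BernΘ) (α : ℝ) : Set ↥BernΘ :=
  {θ : ↥BernΘ | |(θ : ℝ) - bMean μ| ≤ bBallLevel μ α}

/-!
For a generic prior, accept `θ` with the constant probability `(1 - α) / P(B)` on the
`1 - (α - ε)` credible ball `B` of the posterior `P`: the constant makes the credibility exactly
`1 - α`, and the support `B` contains the `1 - α` credible ball.

Coverage is only required for one prior, `π₀ = (w/2) δ₀ + (1 - w) δ_{1/2} + (w/2) δ₁` with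
`w = α - ε/2` (any `w ∈ (α - ε, α)` would do). Its posterior given `x` is `(1 - w) δ_{1/2} + w δ_x`,
whose `1 - α` and `1 - (α - ε)` credible balls have radii `w/2` and `(1 - w)/2`. For `π₀`, accept
`θ` with probability `f(q(θ,x))`, where `f(t) = 0` for `t < α`, `f(t) = 1 - α` for
`α ≤ t ≤ 1 - α` and `f(t) = (1 - α)/t` beyond. The identity `t f(t) + (1 - t) f(1 - t) = 1 - α`
makes the coverage exactly `1 - α` at every `θ`, `f(1/2) = f(1) = 1 - α` makes the credibility
`1 - α`, and the support `{θ : q(θ,x) ≥ α}` lies between the two credible balls.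
-/

namespace BernoulliMatching

open Measure Set ENNReal

section TwoAtoms

variable {X : Type*} [MeasurableSpace X] [MeasurableSingletonClass X]

lemma integral_smul_dirac_add_smul_dirac (u v : X) {a b : ℝ} (ha : 0 ≤ a) (hb : 0 ≤ b)
    (g : X → ℝ) :
    ∫ y, g y ∂(ENNReal.ofReal a • dirac u + ENNReal.ofReal b • dirac v) = a * g u + b * g v := by
  have hint (w : X) (c : ℝ) : Integrable g (ENNReal.ofReal c • dirac w) :=
    (integrable_dirac enorm_lt_top).smul_measure ofReal_ne_top
  rw [integral_add_measure (hint u a) (hint v b), integral_smul_measure, integral_smul_measure,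
    integral_dirac, integral_dirac, toReal_ofReal ha, toReal_ofReal hb, smul_eq_mul, smul_eq_mul]

open Classical in
lemma smul_dirac_add_smul_dirac_apply_toReal (u v : X) {a b : ℝ} (ha : 0 ≤ a) (hb : 0 ≤ b)
    (s : Set X) :
    ((ENNReal.ofReal a • dirac u + ENNReal.ofReal b • dirac v) s).toReal =
      (if u ∈ s then a else 0) + (if v ∈ s then b else 0) := by
  simp only [Measure.add_apply, Measure.smul_apply, dirac_apply, smul_eq_mul]
  split_ifs <;> simp [*, toReal_add]

end TwoAtoms

section CredibleBall

variable (μ : Measure BernΘ)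

lemma isClosed_setOf_abs_sub_le (M r : ℝ) : IsClosed {θ : BernΘ | |(θ : ℝ) - M| ≤ r} :=
  isClosed_le (continuous_subtype_val.sub continuous_const).abs continuous_const

lemma isClosed_bCredBall (β : ℝ) : IsClosed (bCredBall μ β) :=
  isClosed_setOf_abs_sub_le _ _

lemma bBallLevel_eq_of_forall_lt {β d : ℝ} (hd : 0 < d)
    (hd_mem : 1 - β ≤ (μ {θ : BernΘ | |(θ : ℝ) - bMean μ| ≤ d}).toReal)
    (hlt : ∀ r < d, (μ {θ : BernΘ | |(θ : ℝ) - bMean μ| ≤ r}).toReal < 1 - β) :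
    bBallLevel μ β = d :=
  IsLeast.csInf_eq ⟨⟨hd, hd_mem⟩, fun _ hr => not_lt.1 fun hrd => (hlt _ hrd).not_ge hr.2⟩

variable [IsProbabilityMeasure μ]

lemma abs_bMean_add_one_mem {β : ℝ} (hβ : 0 ≤ β) :
    |bMean μ| + 1 ∈
      {r : ℝ | 0 < r ∧ 1 - β ≤ (μ {θ : BernΘ | |(θ : ℝ) - bMean μ| ≤ r}).toReal} := by
  have huniv : {θ : BernΘ | |(θ : ℝ) - bMean μ| ≤ |bMean μ| + 1} = univ :=
    eq_univ_of_forall fun θ => show |(θ : ℝ) - bMean μ| ≤ _ from (abs_sub _ _).trans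
      (by rw [abs_of_nonneg θ.2.1]; linarith [θ.2.2])
  refine ⟨by positivity, ?_⟩
  rw [huniv, measure_univ, toReal_one]
  linarith

lemma bBallLevel_anti {β β' : ℝ} (hβ' : 0 ≤ β') (hβ : β' ≤ β) :
    bBallLevel μ β ≤ bBallLevel μ β' :=
  csInf_le_csInf ⟨0, fun _ hr => hr.1.le⟩ ⟨_, abs_bMean_add_one_mem μ hβ'⟩
    fun _ hr => ⟨hr.1, le_trans (by linarith) hr.2⟩

lemma bCredBall_subset_bCredBall {β β' : ℝ} (hβ' : 0 ≤ β') (hβ : β' ≤ β) :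
    bCredBall μ β ⊆ bCredBall μ β' :=
  fun _ hθ => hθ.trans (bBallLevel_anti μ hβ' hβ)

-- The balls of radius `r > L_β` all carry mass `≥ 1 - β`, and they decrease to the credible ball.
lemma one_sub_le_measure_bCredBall {β : ℝ} (hβ : 0 ≤ β) :
    1 - β ≤ (μ (bCredBall μ β)).toReal := by
  set M := bMean μ
  set L := bBallLevel μ β
  let ball : ℝ → Set BernΘ := fun r => {θ | |(θ : ℝ) - M| ≤ r}
  have hlarge : ∀ r > L, ENNReal.ofReal (1 - β) ≤ μ (ball r) := fun r hr => by
    obtain ⟨r', hr', hr'r⟩ := exists_lt_of_csInf_lt ⟨_, abs_bMean_add_one_mem μ hβ⟩ hr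
    exact (ofReal_le_of_le_toReal hr'.2).trans (measure_mono fun θ hθ => hθ.trans hr'r.le)
  have hinter : ⋂ r > L, ball r = bCredBall μ β := by
    ext θ
    simp only [mem_iInter, mem_ofPred_eq, ball, bCredBall]
    exact ⟨le_of_forall_gt_imp_ge_of_dense, fun hθ r hr => hθ.trans hr.le⟩
  have htends := tendsto_measure_biInter_gt (μ := μ) (s := ball) (a := L)
    (fun r _ => (isClosed_setOf_abs_sub_le M r).measurableSet.nullMeasurableSet)
    (fun _ _ _ hij _ hθ => hθ.trans hij) ⟨L + 1, by linarith, measure_ne_top _ _⟩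
  rw [hinter] at htends
  exact (ofReal_le_iff_le_toReal (measure_ne_top _ _)).1
    (ge_of_tendsto htends (eventually_nhdsWithin_of_forall hlarge))

end CredibleBall

section Model

@[simp] lemma bq_true (θ : BernΘ) : bq θ true = θ := rfl

@[simp] lemma bq_false (θ : BernΘ) : bq θ false = 1 - θ := rfl

lemma bq_mem_Icc (θ : BernΘ) (x : Bool) : bq θ x ∈ Icc (0 : ℝ) 1 := by
  cases x <;> simp [θ.2.1, θ.2.2]

lemma continuous_bq (x : Bool) : Continuous fun θ : BernΘ => bq θ x := by
  cases x
  · exact continuous_const.sub continuous_subtype_val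
  · exact continuous_subtype_val

lemma bP_eq (θ : BernΘ) :
    bP θ = ENNReal.ofReal θ • dirac true + ENNReal.ofReal (1 - θ) • dirac false := by
  rw [bP, count_withDensity, sum_fintype, Fintype.sum_bool, bq_true, bq_false]

lemma bP_singleton (θ : BernΘ) (x : Bool) : bP θ {x} = ENNReal.ofReal (bq θ x) := by
  cases x <;> simp [bP_eq]

lemma measurable_bP : Measurable bP := by
  refine measurable_of_measurable_coe _ fun s _ => ?_
  have hs := s.toFinite
  have hsum : ∀ θ, bP θ s = ∑ x ∈ hs.toFinset, ENNReal.ofReal (bq θ x) := fun θ => by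
    simp_rw [← bP_singleton, sum_measure_singleton, hs.coe_toFinset]
  simp_rw [hsum]
  exact Finset.measurable_sum _ fun x _ => measurable_ofReal.comp (continuous_bq x).measurable

lemma integral_bP (θ : BernΘ) (g : Bool → ℝ) :
    ∫ x, g x ∂bP θ = θ * g true + (1 - θ) * g false := by
  rw [bP_eq, integral_smul_dirac_add_smul_dirac _ _ θ.2.1 (by linarith [θ.2.2])]

lemma bind_bP_singleton (π : Measure BernΘ) (x : Bool) :
    π.bind bP {x} = ∫⁻ θ, ENNReal.ofReal (bq θ x) ∂π := by
  simp_rw [bind_apply (measurableSet_singleton x) measurable_bP.aemeasurable, bP_singleton]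

lemma ae_bind_bP_lintegral_pos (π : Measure BernΘ) :
    ∀ᵐ x ∂π.bind bP, 0 < ∫⁻ θ, ENNReal.ofReal (bq θ x) ∂π :=
  ae_iff_of_countable.2 fun x hx => pos_iff_ne_zero.2 (bind_bP_singleton π x ▸ hx)

lemma isProbabilityMeasure_bPost (π : ProbabilityMeasure BernΘ) (x : Bool)
    (hZ : 0 < ∫⁻ θ, ENNReal.ofReal (bq θ x) ∂(π : Measure BernΘ)) :
    IsProbabilityMeasure (bPost π x) := by
  have hZ_le : ∫⁻ θ, ENNReal.ofReal (bq θ x) ∂(π : Measure BernΘ) ≤ 1 :=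
    (lintegral_mono fun θ => ofReal_le_one.2 (bq_mem_Icc θ x).2).trans_eq (by simp)
  constructor
  rw [bPost, Measure.smul_apply, withDensity_apply _ MeasurableSet.univ, restrict_univ, smul_eq_mul]
  exact ENNReal.inv_mul_cancel hZ.ne' (hZ_le.trans_lt one_lt_top).ne

end Model

section BallAcceptance

-- The `max` only guards against `μ(B) < 1 - β`, which cannot happen for probability measures.
noncomputable def ballAcceptance (μ : Measure BernΘ) (α β : ℝ) (θ : BernΘ) : ℝ :=
  (bCredBall μ β).indicator
    (fun _ => (1 - α) / max (μ (bCredBall μ β)).toReal (1 - β)) θ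

variable {α β : ℝ} (μ : Measure BernΘ)

lemma ballAcceptance_mem_Icc (hβα : β ≤ α) (hα : α ≤ 1) (hβ : β < 1) (θ : BernΘ) :
    ballAcceptance μ α β θ ∈ Icc (0 : ℝ) 1 := by
  have hmax := le_max_right (μ (bCredBall μ β)).toReal (1 - β)
  unfold ballAcceptance
  by_cases hθ : θ ∈ bCredBall μ β
  · rw [indicator_of_mem hθ]
    exact ⟨div_nonneg (by linarith) (by linarith),
      (div_le_one (by linarith)).2 (by linarith)⟩
  · rw [indicator_of_notMem hθ]
    exact ⟨le_rfl, zero_le_one⟩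

lemma setOf_ballAcceptance_ne_zero (hα : α < 1) (hβ : β < 1) :
    {θ | ballAcceptance μ α β θ ≠ 0} = bCredBall μ β := by
  have hmax := le_max_right (μ (bCredBall μ β)).toReal (1 - β)
  ext θ
  simp only [ballAcceptance, mem_ofPred_eq, indicator_apply_ne_zero, mem_inter_iff,
    Function.mem_support]
  exact and_iff_left (div_pos (by linarith) (by linarith)).ne'

lemma integral_ballAcceptance [IsProbabilityMeasure μ] (hβ0 : 0 ≤ β) (hβ : β < 1) :
    ∫ θ, ballAcceptance μ α β θ ∂μ = 1 - α := by
  have hmass := one_sub_le_measure_bCredBall μ hβ0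
  have hpos : 0 < (μ (bCredBall μ β)).toReal := by linarith
  unfold ballAcceptance
  rw [max_eq_left hmass,
    integral_indicator_const _ (isClosed_bCredBall μ β).measurableSet, smul_eq_mul,
    measureReal_def, mul_div_cancel₀ _ hpos.ne']

lemma measurable_ballAcceptance : Measurable (ballAcceptance μ α β) :=
  measurable_const.indicator (isClosed_bCredBall μ β).measurableSet

end BallAcceptance

section MatchingAcceptance

noncomputable def matchingAcceptance (α t : ℝ) : ℝ :=
  if t < α then 0 else if t ≤ 1 - α then 1 - α else (1 - α) / t

variable {α : ℝ}

lemma measurable_matchingAcceptance (α : ℝ) : Measurable (matchingAcceptance α) :=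
  measurable_const.ite measurableSet_Iio <|
    measurable_const.ite measurableSet_Iic (measurable_const.div measurable_id)

lemma matchingAcceptance_mem_Icc (hα0 : 0 ≤ α) (hα1 : α ≤ 1) (t : ℝ) :
    matchingAcceptance α t ∈ Icc (0 : ℝ) 1 := by
  unfold matchingAcceptance
  split_ifs with h₁ h₂
  · exact ⟨le_rfl, zero_le_one⟩
  · exact ⟨by linarith, by linarith⟩
  · have ht : 0 < t := by linarith
    exact ⟨div_nonneg (by linarith) ht.le, (div_le_one ht).2 (by linarith)⟩

lemma matchingAcceptance_ne_zero_iff (hα : α < 1) {t : ℝ} :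
    matchingAcceptance α t ≠ 0 ↔ α ≤ t := by
  unfold matchingAcceptance
  split_ifs with h₁ h₂
  · simpa using h₁
  · exact iff_of_true (by linarith) (not_lt.1 h₁)
  · exact iff_of_true (div_ne_zero (by linarith) (by linarith)) (not_lt.1 h₁)

lemma mul_matchingAcceptance_add_mul_matchingAcceptance_one_sub (hα : α ≤ 1 / 2) (t : ℝ) :
    t * matchingAcceptance α t + (1 - t) * matchingAcceptance α (1 - t) = 1 - α := by
  unfold matchingAcceptance
  rcases lt_or_ge t α with h | h
  · rw [if_pos h, if_neg (by linarith), if_neg (by linarith),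
      mul_div_cancel₀ _ (by linarith)]
    ring
  rcases le_or_gt t (1 - α) with h' | h'
  · rw [if_neg (by linarith), if_pos h', if_neg (by linarith), if_pos (by linarith)]
    ring
  · rw [if_neg (by linarith), if_neg (by linarith), if_pos (by linarith),
      mul_div_cancel₀ _ (by linarith)]
    ring

lemma matchingAcceptance_half (hα : α ≤ 1 / 2) : matchingAcceptance α (1 / 2) = 1 - α := by
  rw [matchingAcceptance, if_neg (by linarith), if_pos (by linarith)]

lemma matchingAcceptance_one (hα : α ≤ 1) : matchingAcceptance α 1 = 1 - α := by
  unfold matchingAcceptance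
  split_ifs <;> linarith

lemma integral_one_sub_matchingAcceptance_bP (hα : α ≤ 1 / 2) (θ : BernΘ) :
    ∫ x, (1 - matchingAcceptance α (bq θ x)) ∂bP θ = α := by
  rw [integral_bP, bq_true, bq_false]
  linarith [mul_matchingAcceptance_add_mul_matchingAcceptance_one_sub hα θ]

end MatchingAcceptance

section MatchingPrior

variable {w : ℝ}

noncomputable def half : BernΘ := ⟨1 / 2, by norm_num, by norm_num⟩

def edge (x : Bool) : BernΘ := if x then 1 else 0

@[simp] lemma bq_half (x : Bool) : bq half x = 1 / 2 := by
  cases x <;> norm_num [bq, half]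

@[simp] lemma bq_edge (x : Bool) : bq (edge x) x = 1 := by
  cases x <;> simp [edge]

lemma abs_edge_sub_half (x : Bool) : |(edge x : ℝ) - 1 / 2| = 1 / 2 := by
  cases x <;> norm_num [edge]

noncomputable def matchingPrior (w : ℝ) : Measure BernΘ :=
  ENNReal.ofReal (w / 2) • dirac 0 + ENNReal.ofReal (1 - w) • dirac half +
    ENNReal.ofReal (w / 2) • dirac 1

noncomputable def matchingPosterior (w : ℝ) (x : Bool) : Measure BernΘ :=
  ENNReal.ofReal (1 - w) • dirac half + ENNReal.ofReal w • dirac (edge x)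

lemma isProbabilityMeasure_matchingPrior (hw0 : 0 ≤ w) (hw1 : w ≤ 1) :
    IsProbabilityMeasure (matchingPrior w) := by
  constructor
  simp only [matchingPrior, Measure.add_apply, Measure.smul_apply, measure_univ, smul_eq_mul,
    mul_one]
  rw [← ofReal_add (by linarith) (by linarith), ← ofReal_add (by linarith) (by linarith),
    show w / 2 + (1 - w) + w / 2 = 1 by ring, ofReal_one]

lemma withDensity_matchingPrior (hw0 : 0 ≤ w) (hw1 : w ≤ 1) (x : Bool) :
    (matchingPrior w).withDensity (fun θ => ENNReal.ofReal (bq θ x)) =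
      ENNReal.ofReal ((1 - w) / 2) • dirac half + ENNReal.ofReal (w / 2) • dirac (edge x) := by
  simp only [matchingPrior, withDensity_add_measure, withDensity_smul_measure, dirac_withDensity,
    smul_smul, ← ofReal_mul (by linarith : 0 ≤ w / 2), ← ofReal_mul (by linarith : 0 ≤ 1 - w),
    bq_half]
  cases x <;> norm_num [edge, add_comm, div_eq_mul_inv]

lemma bPost_of_eq_matchingPrior (hw0 : 0 ≤ w) (hw1 : w ≤ 1) {π : ProbabilityMeasure BernΘ}
    (hπ : (π : Measure BernΘ) = matchingPrior w) (x : Bool) :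
    bPost π x = matchingPosterior w x := by
  have hZ : ∫⁻ θ, ENNReal.ofReal (bq θ x) ∂(π : Measure BernΘ) = 2⁻¹ := by
    rw [hπ, ← setLIntegral_univ, ← withDensity_apply _ MeasurableSet.univ,
      withDensity_matchingPrior hw0 hw1]
    simp only [Measure.add_apply, Measure.smul_apply, measure_univ, smul_eq_mul, mul_one]
    rw [← ofReal_add (by linarith) (by linarith), show (1 - w) / 2 + w / 2 = 2⁻¹ by ring,
      ofReal_inv_of_pos two_pos, ofReal_ofNat]
  rw [bPost, hZ, hπ, withDensity_matchingPrior hw0 hw1, inv_inv, smul_add, smul_smul, smul_smul,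
    ← ofReal_ofNat 2, ← ofReal_mul zero_le_two, ← ofReal_mul zero_le_two, matchingPosterior]
  ring_nf

lemma bMean_matchingPosterior (hw0 : 0 ≤ w) (hw1 : w ≤ 1) (x : Bool) :
    bMean (matchingPosterior w x) = (1 - w) / 2 + w * edge x := by
  rw [bMean, matchingPosterior, integral_smul_dirac_add_smul_dirac _ _ (by linarith) hw0, half]
  ring

open Classical in
lemma matchingPosterior_ball_toReal (hw0 : 0 ≤ w) (hw1 : w ≤ 1) (x : Bool) (r : ℝ) :
    (matchingPosterior w x
        {θ : BernΘ | |(θ : ℝ) - bMean (matchingPosterior w x)| ≤ r}).toReal =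
      (if w / 2 ≤ r then 1 - w else 0) + (if (1 - w) / 2 ≤ r then w else 0) := by
  have hhalf : |(half : ℝ) - bMean (matchingPosterior w x)| = w / 2 := by
    rw [bMean_matchingPosterior hw0 hw1, half,
      show (1 / 2 : ℝ) - ((1 - w) / 2 + w * edge x) = -(w * (edge x - 1 / 2)) by ring,
      abs_neg, abs_mul, abs_edge_sub_half, abs_of_nonneg hw0]
    ring
  have hedge : |(edge x : ℝ) - bMean (matchingPosterior w x)| = (1 - w) / 2 := by
    rw [bMean_matchingPosterior hw0 hw1,
      show (edge x : ℝ) - ((1 - w) / 2 + w * edge x) = (1 - w) * (edge x - 1 / 2) by ring,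
      abs_mul, abs_edge_sub_half, abs_of_nonneg (by linarith)]
    ring
  set M := bMean (matchingPosterior w x)
  rw [matchingPosterior, smul_dirac_add_smul_dirac_apply_toReal _ _ (by linarith) hw0]
  simp only [mem_ofPred_eq, hhalf, hedge]

lemma bBallLevel_matchingPosterior_of_le {β : ℝ} (hw0 : 0 < w) (hw : w ≤ 1 / 2) (hwβ : w ≤ β)
    (hβ : β < 1) (x : Bool) : bBallLevel (matchingPosterior w x) β = w / 2 := by
  refine bBallLevel_eq_of_forall_lt _ (by linarith) ?_ fun r hr => ?_ <;>
    rw [matchingPosterior_ball_toReal hw0.le (by linarith)] <;> split_ifs <;> linarith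

lemma bBallLevel_matchingPosterior_of_lt {β : ℝ} (hβ : 0 ≤ β) (hβw : β < w) (hw : w ≤ 1 / 2)
    (x : Bool) : bBallLevel (matchingPosterior w x) β = (1 - w) / 2 := by
  refine bBallLevel_eq_of_forall_lt _ (by linarith) ?_ fun r hr => ?_ <;>
    rw [matchingPosterior_ball_toReal (by linarith) (by linarith)] <;> split_ifs <;> linarith

lemma abs_sub_bMean_matchingPosterior_le_of_le_bq {α : ℝ} (hw0 : 0 ≤ w) (hwα : w ≤ α)
    {θ : BernΘ} {x : Bool} (h : α ≤ bq θ x) :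
    |(θ : ℝ) - bMean (matchingPosterior w x)| ≤ (1 - w) / 2 := by
  rw [bMean_matchingPosterior hw0 (by linarith [(bq_mem_Icc θ x).2]), abs_le]
  cases x <;> simp only [edge, bq_true, bq_false] at h ⊢ <;> norm_num <;>
    constructor <;> linarith [θ.2.1, θ.2.2]

lemma le_bq_of_abs_sub_bMean_matchingPosterior_le {α : ℝ} (hw0 : 0 ≤ w) (hw1 : w ≤ 1)
    (hα : α ≤ 1 / 2) {θ : BernΘ} {x : Bool}
    (h : |(θ : ℝ) - bMean (matchingPosterior w x)| ≤ w / 2) : α ≤ bq θ x := by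
  rw [bMean_matchingPosterior hw0 hw1, abs_le] at h
  cases x <;> simp only [edge, bq_true, bq_false] at h ⊢ <;> norm_num at h <;> linarith

end MatchingPrior

section CredibleAcceptance

structure IsCredibleAcceptance (α ε : ℝ) (π : ProbabilityMeasure BernΘ)
    (φ : BernΘ → Bool → ℝ) : Prop where
  mem_Icc : ∀ θ x, φ θ x ∈ Icc (0 : ℝ) 1
  measurable : Measurable fun p : BernΘ × Bool => φ p.1 p.2
  integral_bPost : ∀ x, 0 < ∫⁻ θ, ENNReal.ofReal (bq θ x) ∂(π : Measure BernΘ) →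
    ∫ θ, φ θ x ∂bPost π x = 1 - α
  closure_support_subset : ∀ x, 0 < ∫⁻ θ, ENNReal.ofReal (bq θ x) ∂(π : Measure BernΘ) →
    closure {θ | φ θ x ≠ 0} ⊆ bCredBall (bPost π x) (α - ε)
  bCredBall_subset : ∀ x, 0 < ∫⁻ θ, ENNReal.ofReal (bq θ x) ∂(π : Measure BernΘ) →
    bCredBall (bPost π x) α ⊆ closure {θ | φ θ x ≠ 0}

variable {α ε : ℝ}

lemma isCredibleAcceptance_ballAcceptance (hε : 0 ≤ ε) (hεα : ε ≤ α) (hα : α < 1)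
    (π : ProbabilityMeasure BernΘ) :
    IsCredibleAcceptance α ε π fun θ x => ballAcceptance (bPost π x) α (α - ε) θ := by
  have hsupp (x : Bool) : closure {θ | ballAcceptance (bPost π x) α (α - ε) θ ≠ 0} =
      bCredBall (bPost π x) (α - ε) := by
    rw [setOf_ballAcceptance_ne_zero _ hα (by linarith), (isClosed_bCredBall _ _).closure_eq]
  refine ⟨fun θ x => ?_, ?_, fun x hZ => ?_, fun x _ => (hsupp x).le, fun x hZ => ?_⟩
  · exact ballAcceptance_mem_Icc _ (by linarith) hα.le (by linarith) θ
  · exact measurable_from_prod_countable_left fun x => measurable_ballAcceptance (bPost π x)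
  · have := isProbabilityMeasure_bPost π x hZ
    exact integral_ballAcceptance _ (by linarith) (by linarith)
  · have := isProbabilityMeasure_bPost π x hZ
    exact (hsupp x).symm ▸ bCredBall_subset_bCredBall _ (by linarith) (by linarith)

lemma isCredibleAcceptance_matchingAcceptance (hα : α ≤ 1 / 2) (hε : 0 < ε) (hεα : ε < α)
    {π : ProbabilityMeasure BernΘ} (hπ : (π : Measure BernΘ) = matchingPrior (α - ε / 2)) :
    IsCredibleAcceptance α ε π fun θ x => matchingAcceptance α (bq θ x) := by
  have hpost := bPost_of_eq_matchingPrior (by linarith) (by linarith) hπ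
  have hsupp (x : Bool) : closure {θ | matchingAcceptance α (bq θ x) ≠ 0} = {θ | α ≤ bq θ x} := by
    simp_rw [matchingAcceptance_ne_zero_iff (by linarith : α < 1)]
    exact (isClosed_le continuous_const (continuous_bq x)).closure_eq
  refine ⟨fun θ x => ?_, ?_, fun x _ => ?_, fun x _ => ?_, fun x _ => ?_⟩
  · exact matchingAcceptance_mem_Icc (by linarith) (by linarith) _
  · exact measurable_from_prod_countable_left fun x =>
      (measurable_matchingAcceptance α).comp (continuous_bq x).measurable
  · rw [hpost, matchingPosterior,
      integral_smul_dirac_add_smul_dirac _ _ (by linarith) (by linarith), bq_half, bq_edge,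
      matchingAcceptance_half hα, matchingAcceptance_one (by linarith)]
    ring
  · rw [hsupp, hpost, bCredBall,
      bBallLevel_matchingPosterior_of_lt (by linarith) (by linarith) (by linarith)]
    exact fun θ h => abs_sub_bMean_matchingPosterior_le_of_le_bq (by linarith) (by linarith) h
  · rw [hsupp, hpost, bCredBall,
      bBallLevel_matchingPosterior_of_le (by linarith) (by linarith) (by linarith) (by linarith)]
    exact fun θ h => le_bq_of_abs_sub_bMean_matchingPosterior_le (by linarith) (by linarith) hα h

end CredibleAcceptance

section Acceptance

open Classical in
noncomputable def acceptance (α ε : ℝ) (π : ProbabilityMeasure BernΘ) (θ : BernΘ)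
    (x : Bool) : ℝ :=
  if (π : Measure BernΘ) = matchingPrior (α - ε / 2) then matchingAcceptance α (bq θ x)
  else ballAcceptance (bPost π x) α (α - ε) θ

lemma isCredibleAcceptance_acceptance {α ε : ℝ} (hα : α ≤ 1 / 2) (hε : 0 < ε) (hεα : ε < α)
    (π : ProbabilityMeasure BernΘ) : IsCredibleAcceptance α ε π (acceptance α ε π) := by
  by_cases hπ : (π : Measure BernΘ) = matchingPrior (α - ε / 2)
  · convert isCredibleAcceptance_matchingAcceptance hα hε hεα hπ using 1
    exact funext₂ fun θ x => if_pos hπ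
  · convert isCredibleAcceptance_ballAcceptance hε.le hεα.le (by linarith) π using 1
    exact funext₂ fun θ x => if_neg hπ

end Acceptance

end BernoulliMatching

open BernoulliMatching

/-- for the Bernoulli model with `α ∈ (0, 0.2)` and `ε ∈ (0, α)`, there are a
family of `1-α` credible regions (given by its acceptance probability function `ψ`) and a
matching prior `π₀`, the supports of the regions agreeing with the usual credible balls of the
posteriors up to `ε`-fattenings (whenever the posterior is defined, i.e. the normalizing
constant is positive). -/
theorem bernoulli_matching_prior_for_approximate_credible_balls
    (α ε : ℝ) (hα : α ∈ Set.Ioo (0:ℝ) 0.2) (hε : ε ∈ Set.Ioo 0 α) :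
    ∃ ψ : ProbabilityMeasure ↥BernΘ → ↥BernΘ → Bool → ℝ,
    ∃ π₀ : ProbabilityMeasure ↥BernΘ,
      (∀ π θ x, ψ π θ x ∈ Set.Icc (0:ℝ) 1) ∧
      (∀ π : ProbabilityMeasure ↥BernΘ, Measurable fun p : ↥BernΘ × Bool => ψ π p.1 p.2) ∧
      -- (a) credibility exactly `1 - α`
      (∀ π : ProbabilityMeasure ↥BernΘ,
        ∀ᵐ x ∂((π : Measure ↥BernΘ).bind fun θ => bP θ),
          ∫ θ, ψ π θ x ∂(bPost π x) = 1 - α) ∧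
      -- (b) `π₀` is a matching prior
      (∀ θ : ↥BernΘ, ∫ x, (1 - ψ π₀ θ x) ∂(bP θ) ≤ α) ∧
      -- (c) support containments relative to the usual credible balls
      (∀ π : ProbabilityMeasure ↥BernΘ, ∀ x : Bool,
        0 < ∫⁻ θ, ENNReal.ofReal (bq θ x) ∂(π : Measure ↥BernΘ) →
        (Subtype.val '' closure {θ : ↥BernΘ | ψ π θ x ≠ 0} ⊆
            Metric.thickening ε (Subtype.val '' bCredBall (bPost π x) (α - ε)) ∧
          Subtype.val '' bCredBall (bPost π x) α ⊆
            Metric.thickening ε (Subtype.val '' closure {θ : ↥BernΘ | ψ π θ x ≠ 0}))) := by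
  obtain ⟨-, hα_lt⟩ := hα
  obtain ⟨hε0, hεα⟩ := hε
  have hα_half : α ≤ 1 / 2 := by norm_num at hα_lt; linarith
  have hψ := isCredibleAcceptance_acceptance hα_half hε0 hεα
  have hπ₀ := isProbabilityMeasure_matchingPrior (w := α - ε / 2) (by linarith) (by linarith)
  have hψ₀ : acceptance α ε ⟨matchingPrior (α - ε / 2), hπ₀⟩ = fun θ x =>
      matchingAcceptance α (bq θ x) := by
    ext θ x; exact if_pos rfl
  refine ⟨acceptance α ε, ⟨matchingPrior (α - ε / 2), hπ₀⟩, fun π => (hψ π).mem_Icc,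
    fun π => (hψ π).measurable,
    fun π => (ae_bind_bP_lintegral_pos π).mono fun x hZ => (hψ π).integral_bPost x hZ,
    fun θ => by rw [hψ₀]; exact (integral_one_sub_matchingAcceptance_bP hα_half θ).le,
    fun π x hZ => ⟨?_, ?_⟩⟩
  · exact (Set.image_mono ((hψ π).closure_support_subset x hZ)).trans
      (Metric.self_subset_thickening hε0 _)
  · exact (Set.image_mono ((hψ π).bCredBall_subset x hZ)).trans
      (Metric.self_subset_thickening hε0 _)
end

section
/- Let Θ′ ⊆ ℝ^d be compact with positive Lebesgue measure, α ∈ (0,1), β ∈ (0,∞), and μ a Borel probability measure on Θ′ absolutely continuous with respect to Lebesgue measure with a Lipschitz density ρ. Set β̂ = β / max(1, Lip(ρ)), where Lip(ρ) is the Lipschitz constant of ρ. For d ≥ 0 define f_d(θ) = 1 if ρ(θ) ≥ d; f_d(θ) = β̂(ρ(θ) − (d − β̂⁻¹)) if d − β̂⁻¹ < ρ(θ) < d; and f_d(θ) = 0 if ρ(θ) ≤ d − β̂⁻¹. Then d* := sup{ d ≥ 0 : ∫_{Θ′} f_d dμ ≥ 1−α } is well-defined and attained, ∫_{Θ′} f_{d*}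 dμ = 1 − α, and each f_d (in particular f_{d*}) is β-Lipschitz on Θ′. -/
open MeasureTheory NNReal

/-- Lebesgue measure on a subset of Euclidean space, viewed as a measure on the subtype. -/
noncomputable def lebOn {d : ℕ} (Θ' : Set (EuclideanSpace ℝ (Fin d))) : Measure ↥Θ' :=
  (volume : Measure (EuclideanSpace ℝ (Fin d))).comap Subtype.val

/-- The acceptance function `f_d(θ)` of the relaxed HPD region with renormalized slope `βh`:
`f_d(θ) = min(1, max(0, βh (ρ(θ) − d) + 1))`, i.e. it equals `1` when `ρ(θ) ≥ d`, `0` when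
`ρ(θ) ≤ d − βh⁻¹`, and interpolates linearly in between. -/
noncomputable def relaxedHPDFn {T : Type*} (ρ : T → ℝ) (βh dd : ℝ) (θ : T) : ℝ :=
  min 1 (max 0 (βh * (ρ θ - dd) + 1))

/-- The set of levels `d ≥ 0` at which the relaxed HPD acceptance function has `μ`-integral at
least `1 − α`. -/
noncomputable def relaxedHPDSet {T : Type*} [MeasurableSpace T]
    (μ : Measure T) (ρ : T → ℝ) (α βh : ℝ) : Set ℝ :=
  {dd : ℝ | 0 ≤ dd ∧ 1 - α ≤ ∫ θ, relaxedHPDFn ρ βh dd θ ∂μ}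

/-! The integral `F(d) = ∫ f_d dμ` is `β̂`-Lipschitz in the level `d`, because clamping to
`[0, 1]` is `1`-Lipschitz. It equals `1` at `d = 0` (as `ρ ≥ 0` a.e.) and `0` beyond
`max ρ + β̂⁻¹`, so the superlevel set `{d ≥ 0 : F d ≥ 1 − α}` is nonempty, closed and bounded,
and contains its supremum `d*`. Every level above `d*` has `F < 1 − α`, so continuity from the
right gives `F d* = 1 − α`. The slope of `f_d` in `θ` is at most `β̂ · Lip(ρ) ≤ β`. -/

lemma abs_clamp_sub_clamp_le (a b : ℝ) :
    |min 1 (max 0 a) - min 1 (max 0 b)| ≤ |a - b| := by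
  refine (abs_min_sub_min_le_max _ _ _ _).trans (max_le (by simp) ?_)
  rw [max_comm 0 a, max_comm 0 b]
  exact abs_max_sub_max_le_abs a b 0

section relaxedHPDFn

variable {T : Type*} {ρ : T → ℝ} {βh : ℝ}

lemma relaxedHPDFn_mem_Icc (dd : ℝ) (θ : T) : relaxedHPDFn ρ βh dd θ ∈ Set.Icc (0 : ℝ) 1 :=
  ⟨le_min zero_le_one (le_max_left _ _), min_le_left _ _⟩

lemma abs_relaxedHPDFn_sub_le (hβh : 0 ≤ βh) (d₁ d₂ : ℝ) (x y : T) :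
    |relaxedHPDFn ρ βh d₁ x - relaxedHPDFn ρ βh d₂ y| ≤ βh * |(ρ x - ρ y) - (d₁ - d₂)| :=
  calc |relaxedHPDFn ρ βh d₁ x - relaxedHPDFn ρ βh d₂ y|
      ≤ |(βh * (ρ x - d₁) + 1) - (βh * (ρ y - d₂) + 1)| := abs_clamp_sub_clamp_le _ _
    _ = βh * |(ρ x - ρ y) - (d₁ - d₂)| := by
      rw [show βh * (ρ x - d₁) + 1 - (βh * (ρ y - d₂) + 1) = βh * ((ρ x - ρ y) - (d₁ - d₂)) by
        ring, abs_mul, abs_of_nonneg hβh]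

lemma relaxedHPDFn_eq_one (hβh : 0 ≤ βh) {dd : ℝ} {θ : T} (h : dd ≤ ρ θ) :
    relaxedHPDFn ρ βh dd θ = 1 := by
  have : 1 ≤ βh * (ρ θ - dd) + 1 := by nlinarith
  rw [relaxedHPDFn, max_eq_right (zero_le_one.trans this), min_eq_left this]

lemma relaxedHPDFn_eq_zero (hβh : 0 < βh) {dd : ℝ} {θ : T} (h : ρ θ ≤ dd - βh⁻¹) :
    relaxedHPDFn ρ βh dd θ = 0 := by
  have : βh * (ρ θ - dd) + 1 ≤ 0 := by
    have := mul_le_mul_of_nonneg_left (show ρ θ - dd ≤ -βh⁻¹ by linarith) hβh.le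
    rw [mul_neg, mul_inv_cancel₀ hβh.ne'] at this
    linarith
  rw [relaxedHPDFn, max_eq_left this, min_eq_right zero_le_one]

lemma lipschitzWith_relaxedHPDFn [PseudoMetricSpace T] {K : ℝ≥0} (hρ : LipschitzWith K ρ)
    (hβh : 0 ≤ βh) (dd : ℝ) :
    LipschitzWith (Real.toNNReal (βh * K)) (relaxedHPDFn ρ βh dd) := by
  refine LipschitzWith.of_dist_le_mul fun x y => ?_
  rw [Real.coe_toNNReal _ (by positivity), Real.dist_eq, mul_assoc]
  refine (abs_relaxedHPDFn_sub_le hβh dd dd x y).trans (mul_le_mul_of_nonneg_left ?_ hβh)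
  simpa only [sub_self, sub_zero, Real.dist_eq] using hρ.dist_le_mul x y

lemma continuous_relaxedHPDFn [TopologicalSpace T] (hρ : Continuous ρ) (dd : ℝ) :
    Continuous (relaxedHPDFn ρ βh dd) := by
  unfold relaxedHPDFn
  fun_prop

end relaxedHPDFn

section integral

variable {T : Type*} [MeasurableSpace T] {μ : Measure T} {ρ : T → ℝ} {α βh : ℝ}

lemma ae_nonneg_of_eq_withDensity_ofReal {ν : Measure T} (hρ : Measurable ρ)
    (h : μ = ν.withDensity fun θ => ENNReal.ofReal (ρ θ)) :
    ∀ᵐ θ ∂μ, 0 ≤ ρ θ := by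
  rw [h, ae_withDensity_iff hρ.ennreal_ofReal]
  exact Filter.Eventually.of_forall fun θ hθ => (ENNReal.ofReal_ne_zero_iff.mp hθ).le

lemma integral_relaxedHPDFn_zero [IsProbabilityMeasure μ] (hβh : 0 ≤ βh)
    (hρ : ∀ᵐ θ ∂μ, 0 ≤ ρ θ) : ∫ θ, relaxedHPDFn ρ βh 0 θ ∂μ = 1 := by
  rw [integral_congr_ae (hρ.mono fun θ => relaxedHPDFn_eq_one hβh)]
  simp

lemma relaxedHPDSet_subset_Iic (hα : α < 1) (hβh : 0 < βh) {M : ℝ} (hM : ∀ θ, ρ θ ≤ M) :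
    relaxedHPDSet μ ρ α βh ⊆ Set.Iic (M + βh⁻¹) := by
  intro dd ⟨_, hdd⟩
  by_contra hlt
  have hzero : ∫ θ, relaxedHPDFn ρ βh dd θ ∂μ = 0 :=
    integral_eq_zero_of_ae (Filter.Eventually.of_forall fun θ =>
      relaxedHPDFn_eq_zero hβh (by linarith [hM θ, Set.notMem_Iic.mp hlt]))
  linarith

variable [TopologicalSpace T] [OpensMeasurableSpace T]

lemma integrable_relaxedHPDFn [IsFiniteMeasure μ] (hρ : Continuous ρ) (dd : ℝ) :
    Integrable (relaxedHPDFn ρ βh dd) μ := by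
  refine Integrable.mono' (integrable_const 1)
    (continuous_relaxedHPDFn hρ dd).aestronglyMeasurable (Filter.Eventually.of_forall fun θ => ?_)
  have h := relaxedHPDFn_mem_Icc (ρ := ρ) (βh := βh) dd θ
  rw [Real.norm_eq_abs, abs_of_nonneg h.1]
  exact h.2

lemma lipschitzWith_integral_relaxedHPDFn [IsProbabilityMeasure μ] (hρ : Continuous ρ)
    (hβh : 0 ≤ βh) :
    LipschitzWith (Real.toNNReal βh) fun dd => ∫ θ, relaxedHPDFn ρ βh dd θ ∂μ := by
  refine LipschitzWith.of_dist_le_mul fun d₁ d₂ => ?_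
  rw [Real.coe_toNNReal _ hβh, dist_eq_norm, ← integral_sub (integrable_relaxedHPDFn hρ d₁)
    (integrable_relaxedHPDFn hρ d₂), Real.dist_eq]
  calc ‖∫ θ, (relaxedHPDFn ρ βh d₁ θ - relaxedHPDFn ρ βh d₂ θ) ∂μ‖
      ≤ βh * |d₁ - d₂| * μ.real Set.univ :=
        norm_integral_le_of_norm_le_const (Filter.Eventually.of_forall fun θ => by
          simpa [abs_sub_comm d₁ d₂] using abs_relaxedHPDFn_sub_le hβh d₁ d₂ θ θ)
    _ = βh * |d₁ - d₂| := by simp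

lemma isClosed_relaxedHPDSet [IsProbabilityMeasure μ] (hρ : Continuous ρ) (hβh : 0 ≤ βh) :
    IsClosed (relaxedHPDSet μ ρ α βh) :=
  isClosed_Ici.inter
    (isClosed_le continuous_const (lipschitzWith_integral_relaxedHPDFn hρ hβh).continuous)

lemma integral_relaxedHPDFn_sSup [IsProbabilityMeasure μ] (hρ : Continuous ρ) (hβh : 0 ≤ βh)
    (hne : (relaxedHPDSet μ ρ α βh).Nonempty) (hbdd : BddAbove (relaxedHPDSet μ ρ α βh)) :
    ∫ θ, relaxedHPDFn ρ βh (sSup (relaxedHPDSet μ ρ α βh)) θ ∂μ = 1 - α := by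
  set S := relaxedHPDSet μ ρ α βh
  have hmem : sSup S ∈ S := (isClosed_relaxedHPDSet hρ hβh).csSup_mem hne hbdd
  refine le_antisymm ?_ hmem.2
  have habove : ∀ t ∈ Set.Ioi (sSup S), ∫ θ, relaxedHPDFn ρ βh t θ ∂μ ≤ 1 - α := fun t ht =>
    not_lt.mp fun h => (not_le.mpr ht) (le_csSup hbdd ⟨hmem.1.trans (le_of_lt ht), h.le⟩)
  exact le_of_tendsto
    ((lipschitzWith_integral_relaxedHPDFn hρ hβh).continuous.continuousWithinAt.tendsto)
    (eventually_nhdsWithin_of_forall habove)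

end integral

theorem relaxed_hpd_region_well_defined_general
    {d : ℕ} (Θ' : Set (EuclideanSpace ℝ (Fin d))) (hΘ'c : IsCompact Θ')
    (α β : ℝ) (hα : α ∈ Set.Ioo (0:ℝ) 1) (hβ : 0 < β)
    (K : ℝ≥0) (ρ : ↥Θ' → ℝ) (hρLip : LipschitzWith K ρ)
    (μ : ProbabilityMeasure ↥Θ')
    (hdens : (μ : Measure ↥Θ') = (lebOn Θ').withDensity fun θ => ENNReal.ofReal (ρ θ)) :
    (relaxedHPDSet (μ : Measure ↥Θ') ρ α (β / max 1 (K : ℝ))).Nonempty ∧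
    BddAbove (relaxedHPDSet (μ : Measure ↥Θ') ρ α (β / max 1 (K : ℝ))) ∧
    sSup (relaxedHPDSet (μ : Measure ↥Θ') ρ α (β / max 1 (K : ℝ))) ∈
      relaxedHPDSet (μ : Measure ↥Θ') ρ α (β / max 1 (K : ℝ)) ∧
    (∫ θ, relaxedHPDFn ρ (β / max 1 (K : ℝ))
        (sSup (relaxedHPDSet (μ : Measure ↥Θ') ρ α (β / max 1 (K : ℝ)))) θ
        ∂(μ : Measure ↥Θ') = 1 - α) ∧
    (∀ dd : ℝ, 0 ≤ dd →
      LipschitzWith (Real.toNNReal β) (relaxedHPDFn ρ (β / max 1 (K : ℝ)) dd)) := by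
  have : CompactSpace ↥Θ' := isCompact_iff_compactSpace.mp hΘ'c
  have hmax : 0 < max 1 (K : ℝ) := lt_max_of_lt_left one_pos
  have hβh : 0 < β / max 1 (K : ℝ) := div_pos hβ hmax
  have hρ : Continuous ρ := hρLip.continuous
  have hρ_nonneg := ae_nonneg_of_eq_withDensity_ofReal hρ.measurable hdens
  have hne : (relaxedHPDSet (μ : Measure ↥Θ') ρ α (β / max 1 (K : ℝ))).Nonempty :=
    ⟨0, le_rfl, by rw [integral_relaxedHPDFn_zero hβh.le hρ_nonneg]; linarith [hα.1]⟩
  obtain ⟨M, hM⟩ := (isCompact_range hρ).bddAbove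
  have hbdd : BddAbove (relaxedHPDSet (μ : Measure ↥Θ') ρ α (β / max 1 (K : ℝ))) :=
    bddAbove_Iic.mono (relaxedHPDSet_subset_Iic hα.2 hβh fun θ => hM ⟨θ, rfl⟩)
  have hslope : β / max 1 (K : ℝ) * K ≤ β := by
    rw [div_mul_eq_mul_div, div_le_iff₀ hmax]
    exact mul_le_mul_of_nonneg_left (le_max_right _ _) hβ.le
  refine ⟨hne, hbdd, (isClosed_relaxedHPDSet hρ hβh.le).csSup_mem hne hbdd,
    integral_relaxedHPDFn_sSup hρ hβh.le hne hbdd, fun dd _ => ?_⟩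
  exact (lipschitzWith_relaxedHPDFn hρLip hβh.le dd).weaken (Real.toNNReal_le_toNNReal hslope)

/-- the relaxed HPD region is well-defined. For compact `Θ' ⊆ ℝ^d` of positive
Lebesgue measure, `α ∈ (0,1)`, `β > 0`, and `μ` absolutely continuous with `K`-Lipschitz
density `ρ`, setting `β̂ = β / max(1,K)`, the supremum `d* = sup{d ≥ 0 : ∫ f_d dμ ≥ 1−α}` is
over a nonempty bounded set and is attained, `∫ f_{d*} dμ = 1 − α`, and each `f_d` is
`β`-Lipschitz. -/
theorem relaxed_hpd_region_well_defined
    {d : ℕ} (Θ' : Set (EuclideanSpace ℝ (Fin d))) (hΘ'c : IsCompact Θ')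
    (hΘ'vol : 0 < volume Θ')
    (α β : ℝ) (hα : α ∈ Set.Ioo (0:ℝ) 1) (hβ : 0 < β)
    (K : ℝ≥0) (ρ : ↥Θ' → ℝ) (hρLip : LipschitzWith K ρ)
    (μ : ProbabilityMeasure ↥Θ')
    (hdens : (μ : Measure ↥Θ') = (lebOn Θ').withDensity fun θ => ENNReal.ofReal (ρ θ)) :
    (relaxedHPDSet (μ : Measure ↥Θ') ρ α (β / max 1 (K : ℝ))).Nonempty ∧
    BddAbove (relaxedHPDSet (μ : Measure ↥Θ') ρ α (β / max 1 (K : ℝ))) ∧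
    sSup (relaxedHPDSet (μ : Measure ↥Θ') ρ α (β / max 1 (K : ℝ))) ∈
      relaxedHPDSet (μ : Measure ↥Θ') ρ α (β / max 1 (K : ℝ)) ∧
    (∫ θ, relaxedHPDFn ρ (β / max 1 (K : ℝ))
        (sSup (relaxedHPDSet (μ : Measure ↥Θ') ρ α (β / max 1 (K : ℝ)))) θ
        ∂(μ : Measure ↥Θ') = 1 - α) ∧
    (∀ dd : ℝ, 0 ≤ dd →
      LipschitzWith (Real.toNNReal β) (relaxedHPDFn ρ (β / max 1 (K : ℝ)) dd)) :=
  relaxed_hpd_region_well_defined_general Θ' hΘ'c α β hα hβ K ρ hρLip μ hdens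
end

section
/- Let Θ ⊆ ℝ^d be compact, α, η ∈ (0,1), δ ∈ (0,α), and β, C, γ > 0 with F′ := δη − βCγ > 0. Let p : [δη, δ] → ℝ≥0 be a continuous probability density (i.e. ∫_{[δη,δ]} p(z) dz = 1). Let ν, ν′ be Borel probability measures on Θ with W1(ν, ν′) ≤ Cγ, and for each z ∈ [δη, δ] let ψ_z : Θ → [0,1] be β-Lipschitz, jointly measurable in (z,θ), with ∫_Θ ψ_z dν′ = 1 − (α − z). Then ∫_Θ ( ∫_{[δη,δ]} ψ_z(θ) p(z) dz ) ν(dθ) ≥ 1 − α + F′ > 1 − α. -/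
/-!
Scaling by `β⁻¹` makes each `ψ_z` 1-Lipschitz, so the Kantorovich–Rubinstein form of `W1` gives
`∫ ψ_z dν ≥ ∫ ψ_z dν' - βCγ = 1 - α + z - βCγ ≥ 1 - α + F'` for `z ≥ δη`. Averaging in `z`
against the probability density `p` (Fubini) preserves this lower bound.
-/

open MeasureTheory

/-- The Wasserstein-1 distance between two measures, via Kantorovich–Rubinstein duality. -/
noncomputable def W1 {T : Type*} [MeasurableSpace T] [PseudoMetricSpace T]
    (μ ν : Measure T) : ℝ :=
  sSup { r : ℝ | ∃ f : T → ℝ, LipschitzWith 1 f ∧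
    r = |(∫ t, f t ∂μ) - ∫ t, f t ∂ν| }

open Metric Set Function

section Wasserstein

variable {T : Type*} [PseudoMetricSpace T] [BoundedSpace T] [MeasurableSpace T]
  [OpensMeasurableSpace T] {μ ν : Measure T} {f : T → ℝ}

theorem LipschitzWith.integrable_of_boundedSpace [IsFiniteMeasure μ] {K : NNReal}
    (hf : LipschitzWith K f) : Integrable f μ := by
  obtain ⟨C, hC⟩ := isBounded_iff_forall_norm_le.1 (hf.isBounded_image BoundedSpace.bounded_univ)
  exact .of_bound hf.continuous.aestronglyMeasurable C
    (ae_of_all _ fun x => hC _ (mem_image_of_mem f (mem_univ x)))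

theorem abs_integral_sub_le_diam [IsProbabilityMeasure μ] (hf : LipschitzWith 1 f) (x₀ : T) :
    |∫ x, f x ∂μ - f x₀| ≤ diam (univ : Set T) := by
  have hdiam : ∀ x, ‖f x - f x₀‖ ≤ diam (univ : Set T) := fun x => by
    rw [← dist_eq_norm]
    refine (hf.dist_le_mul x x₀).trans ?_
    rw [NNReal.coe_one, one_mul]
    exact dist_le_diam_of_mem BoundedSpace.bounded_univ (mem_univ x) (mem_univ x₀)
  calc |∫ x, f x ∂μ - f x₀| = ‖∫ x, (f x - f x₀) ∂μ‖ := by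
        rw [integral_sub hf.integrable_of_boundedSpace (integrable_const _), integral_const]
        simp
    _ ≤ diam (univ : Set T) := by
        simpa using norm_integral_le_of_norm_le_const (ae_of_all μ hdiam)

variable [IsProbabilityMeasure μ] [IsProbabilityMeasure ν]

/- `W1` is an `sSup` in `ℝ`, junk unless its defining set is bounded above; on a bounded space
every `|∫ f dμ - ∫ f dν|` is at most `2 * diam univ`. -/
theorem abs_integral_sub_integral_le_W1 (hf : LipschitzWith 1 f) :
    |∫ x, f x ∂μ - ∫ x, f x ∂ν| ≤ W1 μ ν := by
  refine le_csSup ⟨2 * diam (univ : Set T), ?_⟩ ⟨f, hf, rfl⟩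
  rintro r ⟨g, hg, rfl⟩
  obtain ⟨x₀⟩ := nonempty_of_isProbabilityMeasure μ
  have hμ := abs_integral_sub_le_diam (μ := μ) hg x₀
  have hν := abs_integral_sub_le_diam (μ := ν) hg x₀
  calc |∫ x, g x ∂μ - ∫ x, g x ∂ν| ≤ |∫ x, g x ∂μ - g x₀| + |∫ x, g x ∂ν - g x₀| := by
        simpa only [abs_sub_comm (g x₀)] using abs_sub_le _ (g x₀) _
    _ ≤ 2 * diam (univ : Set T) := by linarith

theorem LipschitzWith.abs_integral_sub_integral_le_mul_W1 {K : NNReal}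
    (hf : LipschitzWith K f) : |∫ x, f x ∂μ - ∫ x, f x ∂ν| ≤ K * W1 μ ν := by
  rcases eq_or_ne K 0 with rfl | hK
  · obtain ⟨x₀⟩ := nonempty_of_isProbabilityMeasure μ
    have hconst : f = fun _ => f x₀ := funext fun x => (LipschitzWith.zero_iff f).1 hf x x₀
    rw [hconst]
    simp
  · have h1 : LipschitzWith 1 fun x => (K : ℝ)⁻¹ * f x := by
      have := (lipschitzWith_smul (K : ℝ)⁻¹).comp hf
      simp only [nnnorm_inv, NNReal.nnnorm_eq, inv_mul_cancel₀ hK] at this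
      exact this
    have := abs_integral_sub_integral_le_W1 (μ := μ) (ν := ν) h1
    rw [integral_const_mul, integral_const_mul, ← mul_sub, abs_mul,
      abs_inv, NNReal.abs_eq, inv_mul_le_iff₀ (by positivity)] at this
    exact this

end Wasserstein

section Mixture

variable {Z X : Type*} [MeasurableSpace Z] [MeasurableSpace X] {ρ : Measure Z} [SFinite ρ]
  {ν : Measure X} [IsFiniteMeasure ν]

theorem integral_setIntegral_mul_eq {I : Set Z} {ψ : Z → X → ℝ} {p : Z → ℝ} {B : ℝ}
    (hψ : Measurable (uncurry ψ)) (hψB : ∀ z x, ‖ψ z x‖ ≤ B) (hp : IntegrableOn p I ρ) :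
    ∫ x, ∫ z in I, ψ z x * p z ∂ρ ∂ν = ∫ z in I, (∫ x, ψ z x ∂ν) * p z ∂ρ := by
  have hint : Integrable (fun q : Z × X => ψ q.1 q.2 * p q.1) ((ρ.restrict I).prod ν) :=
    (hp.comp_fst ν).bdd_mul hψ.aestronglyMeasurable (ae_of_all _ fun q => hψB q.1 q.2)
  simp_rw [← integral_mul_const]
  exact integral_integral_swap hint.swap

theorem le_integral_setIntegral_mul_of_le {I : Set Z} (hI : MeasurableSet I) {ψ : Z → X → ℝ}
    {p : Z → ℝ} {B c : ℝ} (hψ : Measurable (uncurry ψ)) (hψB : ∀ z x, ‖ψ z x‖ ≤ B)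
    (hp0 : ∀ z ∈ I, 0 ≤ p z) (hp : IntegrableOn p I ρ) (hp1 : ∫ z in I, p z ∂ρ = 1)
    (hc : ∀ z ∈ I, c ≤ ∫ x, ψ z x ∂ν) :
    c ≤ ∫ x, ∫ z in I, ψ z x * p z ∂ρ ∂ν := by
  have hψint : IntegrableOn (fun z => (∫ x, ψ z x ∂ν) * p z) I ρ := by
    refine hp.bdd_mul (c := B * ν.real univ) ?_ (ae_of_all _ fun z => ?_)
    · exact hψ.stronglyMeasurable.integral_prod_right.aestronglyMeasurable
    · exact norm_integral_le_of_norm_le_const (ae_of_all _ (hψB z))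
  calc c = ∫ z in I, c * p z ∂ρ := by rw [integral_const_mul, hp1, mul_one]
    _ ≤ ∫ z in I, (∫ x, ψ z x ∂ν) * p z ∂ρ :=
        setIntegral_mono_on (hp.const_mul c) hψint hI
          fun z hz => mul_le_mul_of_nonneg_right (hc z hz) (hp0 z hz)
    _ = ∫ x, ∫ z in I, ψ z x * p z ∂ρ ∂ν := (integral_setIntegral_mul_eq hψ hψB hp).symm

end Mixture

theorem perturbed_acceptance_credibility_lower_bound_general
    {d : ℕ} (Θ : Set (EuclideanSpace ℝ (Fin d))) (hΘ : IsCompact Θ)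
    (α η δ β C γ : ℝ)
    (hβ : 0 < β)
    (hF : 0 < δ * η - β * C * γ)
    (p : ℝ → ℝ)
    (hp0 : ∀ z ∈ Set.Icc (δ * η) δ, 0 ≤ p z)
    (hpc : ContinuousOn p (Set.Icc (δ * η) δ))
    (hpint : ∫ z in Set.Icc (δ * η) δ, p z = 1)
    (ν ν' : ProbabilityMeasure ↥Θ)
    (hW : W1 (ν : Measure ↥Θ) (ν' : Measure ↥Θ) ≤ C * γ)
    (ψ : ℝ → ↥Θ → ℝ)
    (hψ01 : ∀ z θ, ψ z θ ∈ Set.Icc (0:ℝ) 1)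
    (hψLip : ∀ z ∈ Set.Icc (δ * η) δ, LipschitzWith (Real.toNNReal β) (ψ z))
    (hψmeas : Measurable fun zθ : ℝ × ↥Θ => ψ zθ.1 zθ.2)
    (hψcred : ∀ z ∈ Set.Icc (δ * η) δ,
      ∫ θ, ψ z θ ∂(ν' : Measure ↥Θ) = 1 - (α - z)) :
    1 - α < 1 - α + (δ * η - β * C * γ) ∧
    1 - α + (δ * η - β * C * γ) ≤
      ∫ θ, (∫ z in Set.Icc (δ * η) δ, ψ z θ * p z) ∂(ν : Measure ↥Θ) := by
  have : CompactSpace Θ := isCompact_iff_compactSpace.mp hΘ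
  have hψ_norm : ∀ z θ, ‖ψ z θ‖ ≤ 1 := fun z θ =>
    abs_le.2 ⟨by linarith [(hψ01 z θ).1], (hψ01 z θ).2⟩
  have hcred : ∀ z ∈ Set.Icc (δ * η) δ,
      1 - α + (δ * η - β * C * γ) ≤ ∫ θ, ψ z θ ∂(ν : Measure ↥Θ) := by
    intro z hz
    have hKR := (hψLip z hz).abs_integral_sub_integral_le_mul_W1
      (μ := (ν : Measure Θ)) (ν := ν')
    rw [Real.coe_toNNReal β hβ.le] at hKR
    have hβW := mul_le_mul_of_nonneg_left hW hβ.le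
    linarith [(abs_le.1 hKR).1, hψcred z hz, hz.1]
  exact ⟨by linarith, le_integral_setIntegral_mul_of_le measurableSet_Icc hψmeas hψ_norm hp0
    hpc.integrableOn_Icc hpint hcred⟩

/-- the perturbed acceptance probability function has credibility at least
`1 − α + F'` where `F' = δη − βCγ > 0`.  Here `ν` and `ν'` are two priors/posteriors at
`W1`-distance at most `Cγ`, each `ψ_z` is a `β`-Lipschitz acceptance function of a
`1−(α−z)` credible region under `ν'`, and `p` is a continuous probability density on
`[δη, δ]`. -/
theorem perturbed_acceptance_credibility_lower_bound
    {d : ℕ} (Θ : Set (EuclideanSpace ℝ (Fin d))) (hΘ : IsCompact Θ)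
    (α η δ β C γ : ℝ)
    (hα : α ∈ Set.Ioo (0:ℝ) 1) (hη : η ∈ Set.Ioo (0:ℝ) 1) (hδ : δ ∈ Set.Ioo 0 α)
    (hβ : 0 < β) (hC : 0 < C) (hγ : 0 < γ)
    (hF : 0 < δ * η - β * C * γ)
    (p : ℝ → ℝ)
    (hp0 : ∀ z ∈ Set.Icc (δ * η) δ, 0 ≤ p z)
    (hpc : ContinuousOn p (Set.Icc (δ * η) δ))
    (hpint : ∫ z in Set.Icc (δ * η) δ, p z = 1)
    (ν ν' : ProbabilityMeasure ↥Θ)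
    (hW : W1 (ν : Measure ↥Θ) (ν' : Measure ↥Θ) ≤ C * γ)
    (ψ : ℝ → ↥Θ → ℝ)
    (hψ01 : ∀ z θ, ψ z θ ∈ Set.Icc (0:ℝ) 1)
    (hψLip : ∀ z ∈ Set.Icc (δ * η) δ, LipschitzWith (Real.toNNReal β) (ψ z))
    (hψmeas : Measurable fun zθ : ℝ × ↥Θ => ψ zθ.1 zθ.2)
    (hψcred : ∀ z ∈ Set.Icc (δ * η) δ,
      ∫ θ, ψ z θ ∂(ν' : Measure ↥Θ) = 1 - (α - z)) :
    1 - α < 1 - α + (δ * η - β * C * γ) ∧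
    1 - α + (δ * η - β * C * γ) ≤
      ∫ θ, (∫ z in Set.Icc (δ * η) δ, ψ z θ * p z) ∂(ν : Measure ↥Θ) :=
  perturbed_acceptance_credibility_lower_bound_general Θ hΘ α η δ β C γ hβ hF p hp0 hpc hpint ν ν'
    hW ψ hψ01 hψLip hψmeas hψcred
end

section
/- Let (Ω, F, μ) be a probability space and g : Ω → [0,1] measurable. Define L(r) = ∫ max(0, g − r) dμ for r ≥ 0. Then: (i) |L(r₂) − L(r₁)| ≤ |r₂ − r₁| for all 0 < r₁ < r₂ < ∞, so L is 1-Lipschitz; (ii) L is monotone nonincreasing; and (iii) for all 0 ≤ r ≤ 1 and all 0 < c ≤ 1 − r, (L(r) − L(r+c))/c ≥ L(r). -/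
/-!
Pointwise, `t ↦ max 0 (x - t)` is 1-Lipschitz and nonincreasing, and integrating against a
probability measure preserves both properties. For (iii), `t ↦ max 0 (x - t)` is convex and
vanishes at `t = r + 1` once `x ≤ 1 ≤ r + 1`; writing `r + c = (1 - c) r + c (r + 1)` gives
`L(r + c) ≤ (1 - c) L(r)`, which rearranges to the difference quotient bound.
-/

open MeasureTheory

lemma abs_max_zero_sub_sub_max_zero_sub_le (x r s : ℝ) :
    |max 0 (x - s) - max 0 (x - r)| ≤ |s - r| := by
  rw [max_comm 0, max_comm 0, abs_sub_comm s r]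
  calc |max (x - s) 0 - max (x - r) 0| ≤ |(x - s) - (x - r)| := abs_max_sub_max_le_abs _ _ _
    _ = |r - s| := by rw [sub_sub_sub_cancel_left]

lemma max_zero_sub_add_le_one_sub_mul {x r c : ℝ} (hx : x - r ≤ 1) (hc₀ : 0 ≤ c)
    (hc₁ : c ≤ 1) : max 0 (x - (r + c)) ≤ (1 - c) * max 0 (x - r) := by
  rcases le_or_gt (x - (r + c)) 0 with h | h
  · rw [max_eq_left h]
    exact mul_nonneg (by linarith) (le_max_left _ _)
  · rw [max_eq_right h.le, max_eq_right (by linarith)]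
    nlinarith

/-- The function `L` of the paper. -/
noncomputable def credibility {Ω : Type*} [MeasurableSpace Ω] (μ : Measure Ω) (g : Ω → ℝ)
    (r : ℝ) : ℝ :=
  ∫ ω, max 0 (g ω - r) ∂μ

section Credibility

variable {Ω : Type*} [MeasurableSpace Ω] {μ : Measure Ω} {g : Ω → ℝ}

lemma integrable_max_zero_sub [IsFiniteMeasure μ] (hg : Integrable g μ) (r : ℝ) :
    Integrable (fun ω => max 0 (g ω - r)) μ :=
  ((hg.sub (integrable_const r)).pos_part).congr
    (.of_forall fun _ => max_comm _ _)

lemma abs_credibility_sub_le [IsProbabilityMeasure μ] (hg : Integrable g μ) (r s : ℝ) :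
    |credibility μ g s - credibility μ g r| ≤ |s - r| := by
  have hbound : ∀ᵐ ω ∂μ, ‖max 0 (g ω - s) - max 0 (g ω - r)‖ ≤ |s - r| :=
    .of_forall fun ω => abs_max_zero_sub_sub_max_zero_sub_le (g ω) r s
  simpa [credibility, ← integral_sub (integrable_max_zero_sub hg s)
    (integrable_max_zero_sub hg r)] using norm_integral_le_of_norm_le_const hbound

lemma credibility_antitone [IsFiniteMeasure μ] (hg : Integrable g μ) :
    Antitone (credibility μ g) := fun r s hrs =>
  integral_mono (integrable_max_zero_sub hg s) (integrable_max_zero_sub hg r)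
    fun ω => max_le_max le_rfl (by linarith)

lemma credibility_add_le_one_sub_mul [IsFiniteMeasure μ] (hg : Integrable g μ)
    (hg₁ : ∀ ω, g ω ≤ 1) {r c : ℝ} (hr : 0 ≤ r) (hc₀ : 0 ≤ c) (hc₁ : c ≤ 1) :
    credibility μ g (r + c) ≤ (1 - c) * credibility μ g r := by
  rw [credibility, credibility, ← integral_const_mul]
  exact integral_mono (integrable_max_zero_sub hg _)
    ((integrable_max_zero_sub hg r).const_mul _)
    fun ω => max_zero_sub_add_le_one_sub_mul (by linarith [hg₁ ω]) hc₀ hc₁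

end Credibility

/-- properties of the credibility function `L(r) = ∫ max(0, g − r) dμ` for a
measurable `g : Ω → [0,1]` on a probability space: (i) `L` is 1-Lipschitz on `(0,∞)`;
(ii) `L` is monotone nonincreasing on `[0,∞)`; (iii) the difference quotient bound
`(L(r) − L(r+c))/c ≥ L(r)` for `0 ≤ r ≤ 1` and `0 < c ≤ 1 − r`. -/
theorem credibility_function_lipschitz_monotone
    {Ω : Type*} [MeasurableSpace Ω] (μ : Measure Ω) [IsProbabilityMeasure μ]
    (g : Ω → ℝ) (hgmeas : Measurable g) (hg01 : ∀ ω, g ω ∈ Set.Icc (0:ℝ) 1) :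
    (∀ r₁ r₂ : ℝ, 0 < r₁ → r₁ < r₂ →
      |(∫ ω, max 0 (g ω - r₂) ∂μ) - ∫ ω, max 0 (g ω - r₁) ∂μ| ≤ |r₂ - r₁|) ∧
    AntitoneOn (fun r : ℝ => ∫ ω, max 0 (g ω - r) ∂μ) (Set.Ici (0:ℝ)) ∧
    (∀ r c : ℝ, 0 ≤ r → r ≤ 1 → 0 < c → c ≤ 1 - r →
      (∫ ω, max 0 (g ω - r) ∂μ) ≤
        ((∫ ω, max 0 (g ω - r) ∂μ) - ∫ ω, max 0 (g ω - (r + c)) ∂μ) / c) := by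
  have hg : Integrable g μ :=
    .of_bound hgmeas.aestronglyMeasurable 1 (.of_forall fun ω => by
      rw [Real.norm_eq_abs, abs_le]
      constructor <;> linarith [(hg01 ω).1, (hg01 ω).2])
  refine ⟨fun r₁ r₂ _ _ => abs_credibility_sub_le hg r₁ r₂,
    (credibility_antitone hg).antitoneOn _, fun r c hr _ hc hcr => ?_⟩
  have hstep := credibility_add_le_one_sub_mul hg (fun ω => (hg01 ω).2) hr hc.le (by linarith)
  rw [le_div_iff₀ hc]
  unfold credibility at hstep
  linarith
end

section
/- Let Θ ⊆ ℝ^d be compact, X a metric space, α ∈ (0,1), β > 0, F′ > 0, and C > 0. Let Post : X × P(Θ) → P(Θ) be C-Lipschitz from (X × P(Θ), d_X + W1) to (P(Θ), W1). Let ψ̃ : X × P(Θ) → C(Θ,[0,1]) be continuous into the sup-norm, with ψ̃(x,π) β-Lipschitz on Θ for every (x,π), and suppose ∫_Θ ψ̃(x,π) dPost(x,π) ≥ 1 − α + F′ for all (x,π). Define L_{x,π}(r) = ∫_Θ max(0, ψ̃(x,π) − r) dPost(x,π), R(x,π) = sup{ r ∈ [0,1] : L_{x,π}(r) ≥ 1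 − α }, and ψ(x,π) = max(0, ψ̃(x,π) − R(x,π)). Then (x,π) ↦ R(x,π) is continuous from (X × P(Θ), d_X + W1) to [0,1], and (x,π) ↦ ψ(x,π) is continuous from (X × P(Θ), d_X + W1) to (C(Θ,[0,1]), sup-norm). In particular, for every θ ∈ Θ, the map (x,π) ↦ ψ(x,π)(θ) is jointly continuous on X × P(Θ). -/
open MeasureTheory

/-- The level correction `R(x,π) = sup{r ∈ [0,1] : ∫ max(0, ψ̃(x,π) − r) dPost(x,π) ≥ 1−α}`. -/
noncomputable def Rcorr {T X : Type*} [MeasurableSpace T]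
    (Post : X → ProbabilityMeasure T → ProbabilityMeasure T)
    (ψt : X → ProbabilityMeasure T → T → ℝ) (α : ℝ)
    (x : X) (π : ProbabilityMeasure T) : ℝ :=
  sSup {r : ℝ | r ∈ Set.Icc (0:ℝ) 1 ∧
    1 - α ≤ ∫ θ, max 0 (ψt x π θ - r) ∂(Post x π : Measure T)}

/-!
The correction `R(x,π)` is the last level `r ∈ [0,1]` at which the excess mass
`L(r) = ∫ (ψ̃ - r)⁺ dPost` is still at least `1 - α`. Since `ψ̃ ≤ 1`, `L` decays at a rate
proportional to its own value, `(1 + (r - r')) L(r) ≤ L(r')` for `r' ≤ r`, `0 ≤ r`; hence a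
uniform perturbation of `L` of size `η` moves that last level by `O(η / (1 - α))`. Moving `(x,π)`
perturbs `L` uniformly by at most `‖ψ̃(x',π') - ψ̃(x,π)‖∞ + β W1(Post(x',π'), Post(x,π))`,
as `(ψ̃ - r)⁺` is `β`-Lipschitz, and both terms are small by hypothesis. Continuity of
`ψ = (ψ̃ - R)⁺` follows because `(·)⁺` is `1`-Lipschitz.
-/

open Set

/-- Equals `0` when no `r ∈ [0,1]` satisfies `c ≤ L r`, as `sSup ∅ = 0`. -/
noncomputable def levelSup (c : ℝ) (L : ℝ → ℝ) : ℝ :=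
  sSup {r : ℝ | r ∈ Icc (0:ℝ) 1 ∧ c ≤ L r}

section levelSup

variable {c : ℝ} {L L' : ℝ → ℝ}

lemma levelSup_nonneg : 0 ≤ levelSup c L :=
  Real.sSup_nonneg fun _ hr => hr.1.1

lemma le_levelSup {r : ℝ} (hr : r ∈ Icc (0:ℝ) 1) (hcr : c ≤ L r) : r ≤ levelSup c L :=
  le_csSup ⟨1, fun _ hr => hr.1.2⟩ ⟨hr, hcr⟩

lemma levelSup_le {b : ℝ} (hb : 0 ≤ b) (h : ∀ r ∈ Icc (0:ℝ) 1, c ≤ L r → r ≤ b) :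
    levelSup c L ≤ b :=
  Real.sSup_le (fun r hr => h r hr.1 hr.2) hb

lemma exists_mem_Icc_lt_of_lt_levelSup {b : ℝ} (hb : 0 ≤ b) (h : b < levelSup c L) :
    ∃ r ∈ Icc (0:ℝ) 1, c ≤ L r ∧ b < r := by
  have hne : {r : ℝ | r ∈ Icc (0:ℝ) 1 ∧ c ≤ L r}.Nonempty := by
    by_contra hempty
    rw [not_nonempty_iff_eq_empty] at hempty
    rw [levelSup, hempty, Real.sSup_empty] at h
    linarith
  obtain ⟨r, ⟨hr, hcr⟩, hbr⟩ := exists_lt_of_lt_csSup hne h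
  exact ⟨r, hr, hcr, hbr⟩

lemma levelSup_le_levelSup_add_of_le_add {s η : ℝ} (hs : 0 < s)
    (hL : ∀ r' r, r' ≤ r → 0 ≤ r → (1 + (r - r')) * L r ≤ L r')
    (hL' : Antitone L') (hLL' : ∀ r, L' r ≤ L r + η) (hη : η * (1 + s) ≤ c * s) :
    levelSup c L' ≤ levelSup c L + 2 * s := by
  set R := levelSup c L
  have hR : 0 ≤ R := levelSup_nonneg
  refine levelSup_le (by linarith) fun r hr hcr => ?_
  by_contra! hRr
  have hmid : L (R + s) < c := by
    by_contra! hc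
    have := le_levelSup ⟨by linarith, by linarith [hr.2]⟩ hc
    linarith
  have hdecay := hL (R + s) (R + 2 * s) (by linarith) (by linarith)
  have hc' : c ≤ L (R + 2 * s) + η := hcr.trans ((hL' hRr.le).trans (hLL' _))
  nlinarith [mul_le_mul_of_nonneg_left hc' (by linarith : (0:ℝ) ≤ 1 + s)]

lemma levelSup_le_levelSup_add_of_sub_le {s η : ℝ} (hs : 0 < s)
    (hL : ∀ r' r, r' ≤ r → 0 ≤ r → (1 + (r - r')) * L r ≤ L r')
    (hLL' : ∀ r, L r - η ≤ L' r) (hη : η ≤ c * s) :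
    levelSup c L ≤ levelSup c L' + 2 * s := by
  have hR' : 0 ≤ levelSup c L' := levelSup_nonneg
  by_contra! hlt
  obtain ⟨r, hr, hcr, hrR⟩ :=
    exists_mem_Icc_lt_of_lt_levelSup (b := levelSup c L - s) (by linarith) (by linarith)
  have hdecay := hL (r - s) r (by linarith) hr.1
  have hc' : c ≤ L' (r - s) := by
    nlinarith [hLL' (r - s), mul_le_mul_of_nonneg_left hcr (by linarith : (0:ℝ) ≤ 1 + s)]
  have := le_levelSup ⟨by linarith, by linarith [hr.2]⟩ hc'
  linarith

lemma abs_levelSup_sub_le {s η : ℝ} (hs : 0 < s)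
    (hL : ∀ r' r, r' ≤ r → 0 ≤ r → (1 + (r - r')) * L r ≤ L r')
    (hL' : Antitone L') (hLL' : ∀ r, |L' r - L r| ≤ η) (hη : η * (1 + s) ≤ c * s) :
    |levelSup c L' - levelSup c L| ≤ 2 * s := by
  have hη₀ : 0 ≤ η := (abs_nonneg _).trans (hLL' 0)
  have hlow : ∀ r, L r - η ≤ L' r := fun r => by linarith [(abs_le.mp (hLL' r)).1]
  have hup : ∀ r, L' r ≤ L r + η := fun r => by linarith [(abs_le.mp (hLL' r)).2]
  have h₁ := levelSup_le_levelSup_add_of_sub_le (c := c) hs hL hlow (by nlinarith)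
  have h₂ := levelSup_le_levelSup_add_of_le_add hs hL hL' hup hη
  exact abs_le.mpr ⟨by linarith, by linarith⟩

end levelSup

lemma abs_integral_sub_integral_le {Ω : Type*} [MeasurableSpace Ω] {μ : Measure Ω}
    [IsProbabilityMeasure μ] {f g : Ω → ℝ} {D : ℝ} (hf : Integrable f μ) (hg : Integrable g μ)
    (hfg : ∀ ω, |f ω - g ω| ≤ D) :
    |∫ ω, f ω ∂μ - ∫ ω, g ω ∂μ| ≤ D := by
  rw [← integral_sub hf hg]
  simpa using norm_integral_le_of_norm_le_const (μ := μ) (f := fun ω => f ω - g ω)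
    (ae_of_all _ hfg)

lemma Continuous.integrable_of_compactSpace {X E : Type*} [TopologicalSpace X] [CompactSpace X]
    [MeasurableSpace X] [OpensMeasurableSpace X] [NormedAddCommGroup E] {μ : Measure X}
    [IsFiniteMeasure μ] {f : X → E} (hf : Continuous f) : Integrable f μ :=
  hf.integrable_of_hasCompactSupport (HasCompactSupport.of_compactSpace f)

section Wasserstein

variable {T : Type*} [PseudoMetricSpace T] [CompactSpace T] [MeasurableSpace T]
  [OpensMeasurableSpace T] {μ ν : Measure T} [IsProbabilityMeasure μ] [IsProbabilityMeasure ν]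

lemma bddAbove_W1_set :
    BddAbove {r : ℝ | ∃ f : T → ℝ, LipschitzWith 1 f ∧
      r = |(∫ t, f t ∂μ) - ∫ t, f t ∂ν|} := by
  obtain ⟨t₀⟩ := nonempty_of_isProbabilityMeasure μ
  refine ⟨2 * Metric.diam (univ : Set T), ?_⟩
  rintro _ ⟨f, hf, rfl⟩
  have hosc : ∀ t, |f t - f t₀| ≤ Metric.diam (univ : Set T) := fun t =>
    calc |f t - f t₀| ≤ 1 * dist t t₀ := by simpa [Real.dist_eq] using hf.dist_le_mul t t₀
      _ ≤ _ := by
        simpa using Metric.dist_le_diam_of_mem isCompact_univ.isBounded (mem_univ t) (mem_univ t₀)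
  have hμ := abs_integral_sub_integral_le (μ := μ) hf.continuous.integrable_of_compactSpace
    (integrable_const (f t₀)) hosc
  have hν := abs_integral_sub_integral_le (μ := ν) hf.continuous.integrable_of_compactSpace
    (integrable_const (f t₀)) hosc
  simp only [integral_const, probReal_univ, one_smul] at hμ hν
  linarith [abs_sub_le (∫ t, f t ∂μ) (f t₀) (∫ t, f t ∂ν), abs_sub_comm (∫ t, f t ∂ν) (f t₀)]

lemma abs_integral_sub_le_W1 {f : T → ℝ} (hf : LipschitzWith 1 f) :
    |∫ t, f t ∂μ - ∫ t, f t ∂ν| ≤ W1 μ ν :=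
  le_csSup (bddAbove_W1_set (μ := μ) (ν := ν)) ⟨f, hf, rfl⟩

lemma abs_integral_sub_le_mul_W1 {K : NNReal} {f : T → ℝ} (hf : LipschitzWith K f) :
    |∫ t, f t ∂μ - ∫ t, f t ∂ν| ≤ K * W1 μ ν := by
  rcases eq_or_ne K 0 with rfl | hK
  · obtain ⟨t₀⟩ := nonempty_of_isProbabilityMeasure μ
    have hconst : ∀ t, f t = f t₀ := fun t => by simpa using hf.dist_le_mul t t₀
    simp [hconst]
  · have hK' : (0 : ℝ) < K := by positivity
    have hscaled : LipschitzWith 1 fun t => (K : ℝ)⁻¹ * f t := by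
      simpa [hK, Function.comp_def] using (lipschitzWith_smul (K : ℝ)⁻¹).comp hf
    have := abs_integral_sub_le_W1 (μ := μ) (ν := ν) hscaled
    rw [integral_const_mul, integral_const_mul, ← mul_sub, abs_mul, abs_of_pos (by positivity),
      inv_mul_le_iff₀ hK'] at this
    exact this

end Wasserstein

lemma abs_max_zero_sub_sub_le (a b r r' : ℝ) :
    |max 0 (a - r) - max 0 (b - r')| ≤ |a - b| + |r - r'| :=
  calc |max 0 (a - r) - max 0 (b - r')| ≤ |(a - b) - (r - r')| := by
        rw [max_comm 0, max_comm 0, sub_sub_sub_comm]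
        exact abs_max_sub_max_le_abs _ _ 0
    _ ≤ |a - b| + |r - r'| := abs_sub _ _

/-- The paper's `L_{x,π}(r)`. -/
noncomputable def excessMass {T : Type*} [MeasurableSpace T] (μ : Measure T) (ψ : T → ℝ)
    (r : ℝ) : ℝ :=
  ∫ t, max 0 (ψ t - r) ∂μ

section excessMass

variable {T : Type*} [PseudoMetricSpace T] [CompactSpace T] [MeasurableSpace T]
  [OpensMeasurableSpace T] {μ ν : Measure T} [IsProbabilityMeasure μ] [IsProbabilityMeasure ν]
  {ψ ψ' : T → ℝ}

lemma integrable_max_zero_sub_s11 (hψ : Continuous ψ) (r : ℝ) :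
    Integrable (fun t => max 0 (ψ t - r)) μ :=
  (continuous_const.max (hψ.sub continuous_const)).integrable_of_compactSpace

lemma antitone_excessMass (hψ : Continuous ψ) : Antitone (excessMass μ ψ) := fun _ _ hrr' =>
  integral_mono (integrable_max_zero_sub_s11 hψ _) (integrable_max_zero_sub_s11 hψ _)
    fun _ => max_le_max le_rfl (by linarith)

/-- Where `ψ > r`, lowering the level from `r` to `r'` adds `r - r'` to the integrand
`ψ - r ≤ 1`, hence at least the fraction `r - r'` of it. -/
lemma one_add_sub_mul_excessMass_le (hψ : Continuous ψ) (hψ₁ : ∀ t, ψ t ≤ 1) {r' r : ℝ}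
    (hr'r : r' ≤ r) (hr : 0 ≤ r) :
    (1 + (r - r')) * excessMass μ ψ r ≤ excessMass μ ψ r' := by
  rw [excessMass, ← integral_const_mul]
  refine integral_mono ((integrable_max_zero_sub_s11 hψ r).const_mul _)
    (integrable_max_zero_sub_s11 hψ r') fun t => ?_
  rcases le_or_gt (ψ t) r with h | h
  · simp [max_eq_left (sub_nonpos.mpr h)]
  · rw [max_eq_right (by linarith), max_eq_right (by linarith)]
    nlinarith [hψ₁ t]

lemma abs_excessMass_sub_le {K : NNReal} {ε : ℝ} (hψ : LipschitzWith K ψ)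
    (hψ' : Continuous ψ') (hψψ' : ∀ t, |ψ' t - ψ t| ≤ ε) (r : ℝ) :
    |excessMass ν ψ' r - excessMass μ ψ r| ≤ ε + K * W1 ν μ := by
  have hfun : |excessMass ν ψ' r - excessMass ν ψ r| ≤ ε :=
    abs_integral_sub_integral_le (integrable_max_zero_sub_s11 hψ' r)
      (integrable_max_zero_sub_s11 hψ.continuous r) fun t =>
        (abs_max_zero_sub_sub_le _ _ r r).trans (by simpa using hψψ' t)
  have hmeas : |excessMass ν ψ r - excessMass μ ψ r| ≤ K * W1 ν μ := by
    simpa [excessMass] using abs_integral_sub_le_mul_W1 (μ := ν) (ν := μ)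
      ((hψ.sub (LipschitzWith.const r)).const_max 0)
  linarith [abs_sub_le (excessMass ν ψ' r) (excessMass ν ψ r) (excessMass μ ψ r)]

end excessMass

lemma Rcorr_eq_levelSup {T X : Type*} [MeasurableSpace T]
    (Post : X → ProbabilityMeasure T → ProbabilityMeasure T)
    (ψt : X → ProbabilityMeasure T → T → ℝ) (α : ℝ) (x : X) (π : ProbabilityMeasure T) :
    Rcorr Post ψt α x π = levelSup (1 - α) (excessMass (Post x π : Measure T) (ψt x π)) :=
  rfl

lemma exists_pos_abs_Rcorr_sub_lt {T X : Type*} [PseudoMetricSpace T] [CompactSpace T]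
    [MeasurableSpace T] [OpensMeasurableSpace T] [PseudoMetricSpace X] {α β C : ℝ}
    (hα : α < 1) (hβ : 0 < β) (hC : 0 < C)
    {Post : X → ProbabilityMeasure T → ProbabilityMeasure T}
    (hPostLip : ∀ (x x' : X) (π π' : ProbabilityMeasure T),
      W1 (Post x π : Measure T) (Post x' π' : Measure T) ≤
        C * (dist x x' + W1 (π : Measure T) (π' : Measure T)))
    {ψt : X → ProbabilityMeasure T → T → ℝ} (hψt₁ : ∀ x π t, ψt x π t ≤ 1)
    (hψtLip : ∀ x π, LipschitzWith (Real.toNNReal β) (ψt x π))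
    {x : X} {π : ProbabilityMeasure T}
    (hψtCont : ∀ ε : ℝ, 0 < ε → ∃ δ : ℝ, 0 < δ ∧ ∀ (x' : X) (π' : ProbabilityMeasure T),
      dist x' x + W1 (π' : Measure T) (π : Measure T) < δ → ∀ t, |ψt x' π' t - ψt x π t| < ε)
    {ε : ℝ} (hε : 0 < ε) :
    ∃ δ : ℝ, 0 < δ ∧ ∀ (x' : X) (π' : ProbabilityMeasure T),
      dist x' x + W1 (π' : Measure T) (π : Measure T) < δ →
      |Rcorr Post ψt α x' π' - Rcorr Post ψt α x π| < ε := by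
  set s := ε / 3 with hs
  set η := (1 - α) * s / (1 + s)
  have hη : 0 < η := by have : 0 < 1 - α := sub_pos.mpr hα; positivity
  have hηs : η * (1 + s) = (1 - α) * s := div_mul_cancel₀ _ (by positivity)
  obtain ⟨δ₁, hδ₁, hψ⟩ := hψtCont (η / 2) (by positivity)
  refine ⟨min δ₁ (η / 2 / (β * C)), by positivity, fun x' π' hd => ?_⟩
  have hW : β * W1 (Post x' π' : Measure T) (Post x π : Measure T) ≤ η / 2 :=
    calc β * W1 (Post x' π' : Measure T) (Post x π : Measure T)
        ≤ β * (C * (η / 2 / (β * C))) := by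
          gcongr
          exact (hPostLip x' x π' π).trans (by gcongr; exact hd.le.trans (min_le_right _ _))
      _ = η / 2 := by field_simp
  have hclose : ∀ r, |excessMass (Post x' π' : Measure T) (ψt x' π') r -
      excessMass (Post x π : Measure T) (ψt x π) r| ≤ η := fun r => by
    have := abs_excessMass_sub_le (μ := (Post x π : Measure T)) (ν := (Post x' π' : Measure T))
      (hψtLip x π) (hψtLip x' π').continuous
      (fun t => (hψ x' π' (hd.trans_le (min_le_left _ _)) t).le) r
    rw [Real.coe_toNNReal _ hβ.le] at this
    linarith
  rw [Rcorr_eq_levelSup, Rcorr_eq_levelSup]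
  refine (abs_levelSup_sub_le (s := s) (by positivity) (fun r' r => one_add_sub_mul_excessMass_le
    (hψtLip x π).continuous (hψt₁ x π)) (antitone_excessMass (hψtLip x' π').continuous) hclose
    hηs.le).trans_lt (by linarith)

theorem corrected_acceptance_function_continuous_general
    {d : ℕ} {X : Type*} [MetricSpace X]
    (Θ : Set (EuclideanSpace ℝ (Fin d))) (hΘ : IsCompact Θ)
    (α β C : ℝ) (hα : α ∈ Set.Ioo (0:ℝ) 1) (hβ : 0 < β) (hC : 0 < C)
    (Post : X → ProbabilityMeasure ↥Θ → ProbabilityMeasure ↥Θ)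
    (hPostLip : ∀ (x x' : X) (π π' : ProbabilityMeasure ↥Θ),
      W1 (Post x π : Measure ↥Θ) (Post x' π' : Measure ↥Θ) ≤
        C * (dist x x' + W1 (π : Measure ↥Θ) (π' : Measure ↥Θ)))
    (ψt : X → ProbabilityMeasure ↥Θ → ↥Θ → ℝ)
    (hψt01 : ∀ x π θ, ψt x π θ ∈ Set.Icc (0:ℝ) 1)
    (hψtLip : ∀ x π, LipschitzWith (Real.toNNReal β) (ψt x π))
    -- `ψ̃` is continuous into the sup-norm
    (hψtCont : ∀ (x : X) (π : ProbabilityMeasure ↥Θ), ∀ ε : ℝ, 0 < ε →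
      ∃ δ : ℝ, 0 < δ ∧ ∀ (x' : X) (π' : ProbabilityMeasure ↥Θ),
        dist x' x + W1 (π' : Measure ↥Θ) (π : Measure ↥Θ) < δ →
        ∀ θ, |ψt x' π' θ - ψt x π θ| < ε) :
    -- `R` is continuous in `(x,π)`
    (∀ (x : X) (π : ProbabilityMeasure ↥Θ), ∀ ε : ℝ, 0 < ε →
      ∃ δ : ℝ, 0 < δ ∧ ∀ (x' : X) (π' : ProbabilityMeasure ↥Θ),
        dist x' x + W1 (π' : Measure ↥Θ) (π : Measure ↥Θ) < δ →
        |Rcorr Post ψt α x' π' - Rcorr Post ψt α x π| < ε) ∧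
    -- `ψ` is continuous in `(x,π)` into the sup-norm
    (∀ (x : X) (π : ProbabilityMeasure ↥Θ), ∀ ε : ℝ, 0 < ε →
      ∃ δ : ℝ, 0 < δ ∧ ∀ (x' : X) (π' : ProbabilityMeasure ↥Θ),
        dist x' x + W1 (π' : Measure ↥Θ) (π : Measure ↥Θ) < δ →
        ∀ θ, |max 0 (ψt x' π' θ - Rcorr Post ψt α x' π') -
          max 0 (ψt x π θ - Rcorr Post ψt α x π)| < ε) ∧
    -- in particular, pointwise joint continuity
    (∀ θ : ↥Θ, ∀ (x : X) (π : ProbabilityMeasure ↥Θ), ∀ ε : ℝ, 0 < ε →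
      ∃ δ : ℝ, 0 < δ ∧ ∀ (x' : X) (π' : ProbabilityMeasure ↥Θ),
        dist x' x + W1 (π' : Measure ↥Θ) (π : Measure ↥Θ) < δ →
        |max 0 (ψt x' π' θ - Rcorr Post ψt α x' π') -
          max 0 (ψt x π θ - Rcorr Post ψt α x π)| < ε) := by
  have : CompactSpace ↥Θ := isCompact_iff_compactSpace.mp hΘ
  have hR x π ε (hε : (0 : ℝ) < ε) := exists_pos_abs_Rcorr_sub_lt hα.2 hβ hC hPostLip
    (fun x π θ => (hψt01 x π θ).2) hψtLip (hψtCont x π) hε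
  have hψ : ∀ (x : X) (π : ProbabilityMeasure ↥Θ), ∀ ε : ℝ, 0 < ε →
      ∃ δ : ℝ, 0 < δ ∧ ∀ (x' : X) (π' : ProbabilityMeasure ↥Θ),
        dist x' x + W1 (π' : Measure ↥Θ) (π : Measure ↥Θ) < δ →
        ∀ θ, |max 0 (ψt x' π' θ - Rcorr Post ψt α x' π') -
          max 0 (ψt x π θ - Rcorr Post ψt α x π)| < ε := by
    intro x π ε hε
    obtain ⟨δ₁, hδ₁, hψt⟩ := hψtCont x π (ε / 2) (by positivity)
    obtain ⟨δ₂, hδ₂, hRcorr⟩ := hR x π (ε / 2) (by positivity)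
    refine ⟨min δ₁ δ₂, lt_min hδ₁ hδ₂, fun x' π' hd θ => ?_⟩
    linarith [abs_max_zero_sub_sub_le (ψt x' π' θ) (ψt x π θ) (Rcorr Post ψt α x' π')
      (Rcorr Post ψt α x π), hψt x' π' (hd.trans_le (min_le_left _ _)) θ,
      hRcorr x' π' (hd.trans_le (min_le_right _ _))]
  exact ⟨hR, hψ, fun θ x π ε hε =>
    (hψ x π ε hε).imp fun _ hδ => ⟨hδ.1, fun x' π' hd => hδ.2 x' π' hd θ⟩⟩

/-- continuity of the corrected acceptance probability function.  If the
posterior map is `C`-Lipschitz into `(P(Θ), W1)`, `ψ̃` is sup-norm continuous in `(x,π)` and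
uniformly `β`-Lipschitz in `θ`, with credibility at least `1−α+F'`, then the correction
`R(x,π)` and the corrected acceptance function `ψ(x,π) = max(0, ψ̃(x,π) − R(x,π))` are
continuous in `(x,π)` (into `[0,1]` and into `(C(Θ,[0,1]), sup-norm)` respectively); in
particular `(x,π) ↦ ψ(x,π)(θ)` is jointly continuous for every `θ`. -/
theorem corrected_acceptance_function_continuous
    {d : ℕ} {X : Type*} [MetricSpace X]
    (Θ : Set (EuclideanSpace ℝ (Fin d))) (hΘ : IsCompact Θ)
    (α β F' C : ℝ) (hα : α ∈ Set.Ioo (0:ℝ) 1) (hβ : 0 < β) (hF' : 0 < F') (hC : 0 < C)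
    (Post : X → ProbabilityMeasure ↥Θ → ProbabilityMeasure ↥Θ)
    (hPostLip : ∀ (x x' : X) (π π' : ProbabilityMeasure ↥Θ),
      W1 (Post x π : Measure ↥Θ) (Post x' π' : Measure ↥Θ) ≤
        C * (dist x x' + W1 (π : Measure ↥Θ) (π' : Measure ↥Θ)))
    (ψt : X → ProbabilityMeasure ↥Θ → ↥Θ → ℝ)
    (hψt01 : ∀ x π θ, ψt x π θ ∈ Set.Icc (0:ℝ) 1)
    (hψtLip : ∀ x π, LipschitzWith (Real.toNNReal β) (ψt x π))
    -- `ψ̃` is continuous into the sup-norm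
    (hψtCont : ∀ (x : X) (π : ProbabilityMeasure ↥Θ), ∀ ε : ℝ, 0 < ε →
      ∃ δ : ℝ, 0 < δ ∧ ∀ (x' : X) (π' : ProbabilityMeasure ↥Θ),
        dist x' x + W1 (π' : Measure ↥Θ) (π : Measure ↥Θ) < δ →
        ∀ θ, |ψt x' π' θ - ψt x π θ| < ε)
    (hcred : ∀ (x : X) (π : ProbabilityMeasure ↥Θ),
      1 - α + F' ≤ ∫ θ, ψt x π θ ∂(Post x π : Measure ↥Θ)) :
    -- `R` is continuous in `(x,π)`
    (∀ (x : X) (π : ProbabilityMeasure ↥Θ), ∀ ε : ℝ, 0 < ε →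
      ∃ δ : ℝ, 0 < δ ∧ ∀ (x' : X) (π' : ProbabilityMeasure ↥Θ),
        dist x' x + W1 (π' : Measure ↥Θ) (π : Measure ↥Θ) < δ →
        |Rcorr Post ψt α x' π' - Rcorr Post ψt α x π| < ε) ∧
    -- `ψ` is continuous in `(x,π)` into the sup-norm
    (∀ (x : X) (π : ProbabilityMeasure ↥Θ), ∀ ε : ℝ, 0 < ε →
      ∃ δ : ℝ, 0 < δ ∧ ∀ (x' : X) (π' : ProbabilityMeasure ↥Θ),
        dist x' x + W1 (π' : Measure ↥Θ) (π : Measure ↥Θ) < δ →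
        ∀ θ, |max 0 (ψt x' π' θ - Rcorr Post ψt α x' π') -
          max 0 (ψt x π θ - Rcorr Post ψt α x π)| < ε) ∧
    -- in particular, pointwise joint continuity
    (∀ θ : ↥Θ, ∀ (x : X) (π : ProbabilityMeasure ↥Θ), ∀ ε : ℝ, 0 < ε →
      ∃ δ : ℝ, 0 < δ ∧ ∀ (x' : X) (π' : ProbabilityMeasure ↥Θ),
        dist x' x + W1 (π' : Measure ↥Θ) (π : Measure ↥Θ) < δ →
        |max 0 (ψt x' π' θ - Rcorr Post ψt α x' π') -
          max 0 (ψt x π θ - Rcorr Post ψt α x π)| < ε) :=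
  corrected_acceptance_function_continuous_general Θ hΘ α β C hα hβ hC Post hPostLip ψt hψt01 hψtLip
    hψtCont
end
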